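/- arXiv:1601.07389 — 6 statements merged into one kernel-verified Lean document; each statement's English description precedes it below -/
import Mathlib

section
/- If p is an element of a commutative ring R such that whenever p² divides a product ab then p divides a or p divides b (i.e. p is primoid), and p is additionally a non-zerodivisor, then for any b, c ∈ R the map x ↦ 2x + b is a bijection from the set of roots in R of X² + bX + c onto the set of square roots in R of b² - 4c, provided we take p = 2. -/
/-- An element `p` of a commutative ring is *primoid* if whenever `p ^ 2` divides a
product, `p` divides one of the factors. -/
def Primoid {R : Type*} [CommRing R] (p : R) : Prop :=
  ∀ a b : R, p ^ 2 ∣ a * b → p ∣ a ∨ p ∣ b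

/-- If `2` is a primoid non-zerodivisor in `R`, then `x ↦ 2 * x + b` is a bijection from
the set of roots of `X ^ 2 + b * X + c` onto the set of square roots of `b ^ 2 - 4 * c`. -/
theorem stmt0 {R : Type*} [CommRing R] (h2 : Primoid (2 : R))
    (hnzd : (2 : R) ∈ nonZeroDivisors R) (b c : R) :
    Set.BijOn (fun x : R => 2 * x + b) {x : R | x ^ 2 + b * x + c = 0}
      {y : R | y ^ 2 = b ^ 2 - 4 * c} := by
  refine ⟨?_, ?_, ?_⟩
  · intro x hx
    simp only [Set.mem_setOf_eq] at hx ⊢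
    linear_combination 4 * hx
  · intro x hx x' hx' h
    simp only at h
    have hz : (x - x') * 2 = 0 := by linear_combination h
    exact sub_eq_zero.mp (hnzd.2 _ hz)
  · intro y hy
    simp only [Set.mem_setOf_eq] at hy
    have hdvd : (2 : R) ∣ y - b := by
      rcases h2 (y - b) (y + b) ⟨-c, by linear_combination hy⟩ with h | h
      · exact h
      · obtain ⟨k, hk⟩ := h
        exact ⟨k - b, by linear_combination hk⟩
    obtain ⟨x, hx⟩ := hdvd
    refine ⟨x, ?_, ?_⟩
    · show x ^ 2 + b * x + c = 0
      have h4 : (2 : R) * (2 * (x ^ 2 + b * x + c)) = 2 * (2 * 0) := by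
        linear_combination hy - (2 * x + y + b) * hx
      have h5 : (2 * (x ^ 2 + b * x + c) - 2 * (2 * 0)) * 2 = 0 := by linear_combination h4
      have h6 : ((x ^ 2 + b * x + c) - 2 * 0) * 2 = 0 := by
        linear_combination sub_eq_zero.mp (hnzd.2 _ h5)
      simpa using sub_eq_zero.mp (hnzd.2 _ h6)
    · show 2 * x + b = y
      linear_combination -hx
end

section
/- If p ∈ ℤ[x₁,x₂,x₃,x₄] is invariant under D₄ = ⟨(1 3),(1 2 3 4)⟩ ⊂ S₄, then the polynomial p' − p'' (where p' = (1 4)·p and p'' = (1 2)·p) is divisible by (x₁−x₃)(x₂−x₄) in ℤ[x₁,x₂,x₃,x₄]. -/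
open MvPolynomial Equiv

lemma dvd_sub_rename_swap {σ : Type*} [DecidableEq σ] (i j : σ)
    (p : MvPolynomial σ ℤ) :
    (X i - X j) ∣ p - rename (⇑(Equiv.swap i j)) p := by
  induction p using MvPolynomial.induction_on with
  | C a => simp
  | add p q hp hq =>
      rw [map_add]
      have h : p + q - (rename (⇑(Equiv.swap i j)) p + rename (⇑(Equiv.swap i j)) q)
          = (p - rename (⇑(Equiv.swap i j)) p) + (q - rename (⇑(Equiv.swap i j)) q) := by ring
      rw [h]; exact dvd_add hp hq
  | mul_X p k hp =>
      rw [map_mul, rename_X]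
      have h : p * X k - rename (⇑(Equiv.swap i j)) p * X (Equiv.swap i j k)
          = (p - rename (⇑(Equiv.swap i j)) p) * X k
            + rename (⇑(Equiv.swap i j)) p * (X k - X (Equiv.swap i j k)) := by ring
      rw [h]
      refine dvd_add (hp.mul_right _) (Dvd.dvd.mul_left ?_ _)
      rcases eq_or_ne k i with rfl | hki
      · rw [Equiv.swap_apply_left]
      rcases eq_or_ne k j with rfl | hkj
      · rw [Equiv.swap_apply_right]; exact dvd_sub_comm.mp dvd_rfl
      · rw [Equiv.swap_apply_of_ne_of_ne hki hkj]; simp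


/-- The dihedral subgroup `D₄ = ⟨(1 3), (1 2 3 4)⟩` of `S₄` (zero-indexed). -/
def D4 : Subgroup (Equiv.Perm (Fin 4)) :=
  Subgroup.closure {Equiv.swap (0 : Fin 4) 2, finRotate 4}

/-- If `p ∈ ℤ[x₁,x₂,x₃,x₄]` is `D₄`-invariant, then `p' − p''` is divisible by
`(x₁−x₃)(x₂−x₄)`, where `p' = (1 4)·p` and `p'' = (1 2)·p` (zero-indexed:
`(0 3)` and `(0 1)`). -/
theorem stmt10 (p : MvPolynomial (Fin 4) ℤ) (hp : ∀ σ ∈ D4, rename (⇑σ) p = p) :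
    (X 0 - X 2) * (X 1 - X 3) ∣
      rename (⇑(Equiv.swap (0 : Fin 4) 3)) p - rename (⇑(Equiv.swap (0 : Fin 4) 1)) p := by
  have hs02 : Equiv.swap (0 : Fin 4) 2 ∈ D4 :=
    Subgroup.subset_closure (Set.mem_insert _ _)
  have hr : finRotate 4 ∈ D4 :=
    Subgroup.subset_closure (Set.mem_insert_of_mem _ rfl)
  have hs13 : Equiv.swap (1 : Fin 4) 3 ∈ D4 := by
    have : Equiv.swap (1 : Fin 4) 3 = finRotate 4 * Equiv.swap (0 : Fin 4) 2 * (finRotate 4)⁻¹ := by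
      decide
    rw [this]
    exact mul_mem (mul_mem hr hs02) (inv_mem hr)
  set a := Equiv.swap (0 : Fin 4) 3 with ha
  set b := Equiv.swap (0 : Fin 4) 1 with hb
  set s02 := Equiv.swap (0 : Fin 4) 2 with hs
  set s13 := Equiv.swap (1 : Fin 4) 3 with ht
  -- rename s02 (rename a p) = rename b p
  have comp : ∀ (σ τ : Equiv.Perm (Fin 4)),
      rename (⇑τ) (rename (⇑σ) p) = rename (⇑(τ * σ)) p := by
    intro σ τ
    rw [rename_rename]; rfl
  have e1 : rename (⇑s02) (rename (⇑a) p) = rename (⇑b) p := by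
    rw [comp]
    have h1 : s02 * a = b * (finRotate 4)⁻¹ := by decide
    rw [h1, ← comp, hp _ (inv_mem hr)]
  have e2 : rename (⇑s13) (rename (⇑a) p) = rename (⇑b) p := by
    rw [comp]
    have h1 : s13 * a = b * s13 := by decide
    rw [h1, ← comp, hp _ hs13]
  have e3 : rename (⇑s13) (rename (⇑b) p) = rename (⇑a) p := by
    rw [comp]
    have h1 : s13 * b = a * s13 := by decide
    rw [h1, ← comp, hp _ hs13]
  set q := rename (⇑a) p - rename (⇑b) p with hq
  have hd1 : (X 0 - X 2) ∣ q := by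
    have := dvd_sub_rename_swap (0 : Fin 4) 2 (rename (⇑a) p)
    rwa [e1] at this
  obtain ⟨q1, hq1⟩ := hd1
  have hanti : rename (⇑s13) q = -q := by
    rw [hq, map_sub, e2, e3]; ring
  have hq1anti : rename (⇑s13) q1 = -q1 := by
    have hz : (Equiv.swap (1 : Fin 4) 3) 0 = 0 := by decide
    have hz2 : (Equiv.swap (1 : Fin 4) 3) 2 = 2 := by decide
    have h2 : rename (⇑s13) q = (X 0 - X 2) * rename (⇑s13) q1 := by
      rw [hq1, map_mul, map_sub, rename_X, rename_X, ht, hz, hz2]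
    rw [hanti, hq1] at h2
    have hx : (X 0 - X 2 : MvPolynomial (Fin 4) ℤ) ≠ 0 := by
      intro h
      have := congrArg (eval (fun k : Fin 4 => if k = 0 then (1 : ℤ) else 0)) h
      simp at this
    exact mul_left_cancel₀ hx (by linear_combination -h2)
  have hd2 : (X 1 - X 3) ∣ (2 : MvPolynomial (Fin 4) ℤ) * q1 := by
    have h := dvd_sub_rename_swap (1 : Fin 4) 3 q1
    rw [hq1anti] at h
    convert h using 1; ring
  obtain ⟨h, hh⟩ := hd2
  have hC2 : Prime (C 2 : MvPolynomial (Fin 4) ℤ) := by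
    rw [MvPolynomial.prime_C_iff]; exact Int.prime_two
  have hC2e : (C 2 : MvPolynomial (Fin 4) ℤ) = 2 := by simp
  have hnd : ¬ (C 2 : MvPolynomial (Fin 4) ℤ) ∣ (X 1 - X 3) := by
    rw [C_dvd_iff_dvd_coeff]
    intro hcontra
    have h1 := hcontra (Finsupp.single 1 1)
    rw [coeff_sub, coeff_X, coeff_X'] at h1
    rw [if_neg (by simp [Finsupp.single_eq_single_iff] : ¬ Finsupp.single (3 : Fin 4) 1 = Finsupp.single 1 1)] at h1
    norm_num at h1
  have hdvd_h : (C 2 : MvPolynomial (Fin 4) ℤ) ∣ h := by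
    have hdd : (C 2 : MvPolynomial (Fin 4) ℤ) ∣ (X 1 - X 3) * h := ⟨q1, by rw [← hh, hC2e]⟩
    rcases (hC2.2.2 _ _ hdd) with h1 | h1
    · exact absurd h1 hnd
    · exact h1
  obtain ⟨h', hh'⟩ := hdvd_h
  have hq1f : q1 = (X 1 - X 3) * h' := by
    have hh2 : h = 2 * h' := by rw [hh', hC2e]
    refine mul_left_cancel₀ (hC2e ▸ hC2.ne_zero) ?_
    linear_combination hh + (X 1 - X 3) * hh2
  exact ⟨h', by rw [hq1, hq1f]; ring⟩
end

section
/- The ring of D₄-invariants ℤ[x₁,x₂,x₃,x₄]^{D₄}, where D₄ = ⟨(1 3),(1 2 3 4)⟩ ⊂ S₄, is a free module of rank 3 over the ring of symmetric polynomials ℤ[x₁,x₂,x₃,x₄]^{S₄}, with basis {1, Λ, Λ²} where Λ = x₁x₃ + x₂x₄. -/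
open MvPolynomial Equiv

namespace Stmt11Aux

lemma fse_aux (s : Fin 4) (h : s ≠ 0) :
    finSuccEquiv ℤ 3 (X s) = Polynomial.C (X (s.pred h)) := by
  have := finSuccEquiv_X_succ (R := ℤ) (n := 3) (j := s.pred h)
  rwa [Fin.succ_pred] at this

noncomputable def E (i : Fin 4) : MvPolynomial (Fin 4) ℤ ≃ₐ[ℤ] Polynomial (MvPolynomial (Fin 3) ℤ) :=
  (renameEquiv ℤ (Equiv.swap i 0)).trans (finSuccEquiv ℤ 3)

lemma swap_ne (i j : Fin 4) (h : i ≠ j) : Equiv.swap i 0 j ≠ 0 := by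
  intro hc
  have : Equiv.swap i 0 j = Equiv.swap i 0 i := by rw [hc, Equiv.swap_apply_left]
  exact h ((Equiv.injective _) this).symm

lemma E_X_i (i : Fin 4) : E i (X i) = Polynomial.X := by
  simp only [E, AlgEquiv.trans_apply, renameEquiv_apply, rename_X, Equiv.swap_apply_left]
  exact finSuccEquiv_X_zero

lemma E_X_ne (i k : Fin 4) (h : i ≠ k) :
    E i (X k) = Polynomial.C (X ((Equiv.swap i 0 k).pred (swap_ne i k h))) := by
  simp only [E, AlgEquiv.trans_apply, renameEquiv_apply, rename_X]
  exact fse_aux _ _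

lemma prime_X_sub_X (i j : Fin 4) (h : i ≠ j) : Prime (X i - X j : MvPolynomial (Fin 4) ℤ) := by
  rw [← MulEquiv.prime_iff (E i)]
  show Prime (E i (X i - X j))
  rw [map_sub, E_X_i, E_X_ne i j h]
  exact Polynomial.prime_X_sub_C _

lemma dvd_of_alt (i j : Fin 4) (h : i ≠ j) (f : MvPolynomial (Fin 4) ℤ)
    (hf : rename (⇑(Equiv.swap i j)) f = -f) : (X i - X j : MvPolynomial (Fin 4) ℤ) ∣ f := by
  set a : Fin 3 := (Equiv.swap i 0 j).pred (swap_ne i j h) with ha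
  set ψ : MvPolynomial (Fin 4) ℤ →+* MvPolynomial (Fin 3) ℤ :=
    (Polynomial.evalRingHom (X a)).comp (E i).toAlgHom.toRingHom with hψ
  have vi : ψ (X i) = X a := by simp [hψ, E_X_i]
  have vj : ψ (X j) = X a := by simp [hψ, E_X_ne i j h, ← ha]
  have key : ψ.comp ((rename (⇑(Equiv.swap i j))).toRingHom) = ψ := by
    apply MvPolynomial.ringHom_ext
    · intro r; simp
    · intro k
      simp only [RingHom.comp_apply, AlgHom.toRingHom_eq_coe, RingHom.coe_coe, rename_X]
      rcases eq_or_ne k i with rfl | h1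
      · rw [Equiv.swap_apply_left, vj, vi]
      rcases eq_or_ne k j with rfl | h2
      · rw [Equiv.swap_apply_right, vi, vj]
      rw [Equiv.swap_apply_of_ne_of_ne h1 h2]
  have hψf : ψ f = 0 := by
    have h1 : ψ (rename (⇑(Equiv.swap i j)) f) = ψ f := by
      have := congrArg (fun g => g f) key
      simpa using this
    rw [hf, map_neg] at h1
    have h2 : (2 : MvPolynomial (Fin 3) ℤ) * ψ f = 0 := by linear_combination -h1
    rcases mul_eq_zero.mp h2 with h3 | h3
    · exact absurd h3 two_ne_zero
    · exact h3
  have hroot : Polynomial.X - Polynomial.C (X a) ∣ E i f := by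
    rw [Polynomial.dvd_iff_isRoot]
    exact hψf
  have := map_dvd (E i).symm hroot
  rwa [show (E i).symm (Polynomial.X - Polynomial.C (X a)) = X i - X j by
      apply (E i).injective; rw [AlgEquiv.apply_symm_apply, map_sub, E_X_i, E_X_ne i j h],
    AlgEquiv.symm_apply_apply] at this

lemma not_dvd_aux (i j k l : Fin 4) (hij : i ≠ j)
    (hne : (if k = i then j else k) ≠ (if l = i then j else l)) :
    ¬ ((X i - X j : MvPolynomial (Fin 4) ℤ) ∣ X k - X l) := by
  intro hd
  have hmap := map_dvd (aeval (R := ℤ) (fun t : Fin 4 => if t = i then (X j : MvPolynomial (Fin 4) ℤ) else X t)) hd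
  simp only [map_sub, aeval_X, if_pos, if_true, ite_self, eq_self_iff_true, sub_self] at hmap
  rw [zero_dvd_iff, sub_eq_zero] at hmap
  apply hne
  split_ifs at hmap ⊢ <;> exact X_injective (R := ℤ) hmap

noncomputable def L1 : MvPolynomial (Fin 4) ℤ := X 0 * X 2 + X 1 * X 3
noncomputable def L2 : MvPolynomial (Fin 4) ℤ := X 0 * X 1 + X 2 * X 3
noncomputable def L3 : MvPolynomial (Fin 4) ℤ := X 0 * X 3 + X 1 * X 2

lemma ren01_L1 : rename (⇑(swap (0:Fin 4) 1)) L1 = L3 := by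
  have h0 : (swap (0:Fin 4) 1) 0 = 1 := by decide
  have h1 : (swap (0:Fin 4) 1) 1 = 0 := by decide
  have h2 : (swap (0:Fin 4) 1) 2 = 2 := by decide
  have h3 : (swap (0:Fin 4) 1) 3 = 3 := by decide
  simp only [L1, L3, map_add, map_mul, rename_X, h0, h1, h2, h3]
  try ring

lemma ren01_L2 : rename (⇑(swap (0:Fin 4) 1)) L2 = L2 := by
  have h0 : (swap (0:Fin 4) 1) 0 = 1 := by decide
  have h1 : (swap (0:Fin 4) 1) 1 = 0 := by decide
  have h2 : (swap (0:Fin 4) 1) 2 = 2 := by decide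
  have h3 : (swap (0:Fin 4) 1) 3 = 3 := by decide
  simp only [L2, L2, map_add, map_mul, rename_X, h0, h1, h2, h3]
  try ring

lemma ren01_L3 : rename (⇑(swap (0:Fin 4) 1)) L3 = L1 := by
  have h0 : (swap (0:Fin 4) 1) 0 = 1 := by decide
  have h1 : (swap (0:Fin 4) 1) 1 = 0 := by decide
  have h2 : (swap (0:Fin 4) 1) 2 = 2 := by decide
  have h3 : (swap (0:Fin 4) 1) 3 = 3 := by decide
  simp only [L3, L1, map_add, map_mul, rename_X, h0, h1, h2, h3]
  try ring

lemma ren12_L1 : rename (⇑(swap (1:Fin 4) 2)) L1 = L2 := by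
  have h0 : (swap (1:Fin 4) 2) 0 = 0 := by decide
  have h1 : (swap (1:Fin 4) 2) 1 = 2 := by decide
  have h2 : (swap (1:Fin 4) 2) 2 = 1 := by decide
  have h3 : (swap (1:Fin 4) 2) 3 = 3 := by decide
  simp only [L1, L2, map_add, map_mul, rename_X, h0, h1, h2, h3]
  try ring

lemma ren12_L2 : rename (⇑(swap (1:Fin 4) 2)) L2 = L1 := by
  have h0 : (swap (1:Fin 4) 2) 0 = 0 := by decide
  have h1 : (swap (1:Fin 4) 2) 1 = 2 := by decide
  have h2 : (swap (1:Fin 4) 2) 2 = 1 := by decide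
  have h3 : (swap (1:Fin 4) 2) 3 = 3 := by decide
  simp only [L2, L1, map_add, map_mul, rename_X, h0, h1, h2, h3]
  try ring

lemma ren12_L3 : rename (⇑(swap (1:Fin 4) 2)) L3 = L3 := by
  have h0 : (swap (1:Fin 4) 2) 0 = 0 := by decide
  have h1 : (swap (1:Fin 4) 2) 1 = 2 := by decide
  have h2 : (swap (1:Fin 4) 2) 2 = 1 := by decide
  have h3 : (swap (1:Fin 4) 2) 3 = 3 := by decide
  simp only [L3, L3, map_add, map_mul, rename_X, h0, h1, h2, h3]
  try ring

lemma ren23_L1 : rename (⇑(swap (2:Fin 4) 3)) L1 = L3 := by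
  have h0 : (swap (2:Fin 4) 3) 0 = 0 := by decide
  have h1 : (swap (2:Fin 4) 3) 1 = 1 := by decide
  have h2 : (swap (2:Fin 4) 3) 2 = 3 := by decide
  have h3 : (swap (2:Fin 4) 3) 3 = 2 := by decide
  simp only [L1, L3, map_add, map_mul, rename_X, h0, h1, h2, h3]
  try ring

lemma ren23_L2 : rename (⇑(swap (2:Fin 4) 3)) L2 = L2 := by
  have h0 : (swap (2:Fin 4) 3) 0 = 0 := by decide
  have h1 : (swap (2:Fin 4) 3) 1 = 1 := by decide
  have h2 : (swap (2:Fin 4) 3) 2 = 3 := by decide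
  have h3 : (swap (2:Fin 4) 3) 3 = 2 := by decide
  simp only [L2, L2, map_add, map_mul, rename_X, h0, h1, h2, h3]
  try ring

lemma ren23_L3 : rename (⇑(swap (2:Fin 4) 3)) L3 = L1 := by
  have h0 : (swap (2:Fin 4) 3) 0 = 0 := by decide
  have h1 : (swap (2:Fin 4) 3) 1 = 1 := by decide
  have h2 : (swap (2:Fin 4) 3) 2 = 3 := by decide
  have h3 : (swap (2:Fin 4) 3) 3 = 2 := by decide
  simp only [L3, L1, map_add, map_mul, rename_X, h0, h1, h2, h3]
  try ring

lemma alt_comp (f : MvPolynomial (Fin 4) ℤ) (a b c s : Perm (Fin 4))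
    (hs : (⇑s : Fin 4 → Fin 4) = ⇑a ∘ ⇑b ∘ ⇑c)
    (ha : rename ⇑a f = -f) (hb : rename ⇑b f = -f) (hc : rename ⇑c f = -f) :
    rename ⇑s f = -f := by
  have key : rename (⇑a ∘ ⇑b ∘ ⇑c) f = rename ⇑a (rename ⇑b (rename ⇑c f)) := by
    rw [rename_rename, rename_rename, Function.comp_assoc]
  rw [hs, key, hc, map_neg, hb, neg_neg, ha]

lemma sym_comp (f : MvPolynomial (Fin 4) ℤ) (a b c s : Perm (Fin 4))
    (hs : (⇑s : Fin 4 → Fin 4) = ⇑a ∘ ⇑b ∘ ⇑c)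
    (ha : rename ⇑a f = f) (hb : rename ⇑b f = f) (hc : rename ⇑c f = f) :
    rename ⇑s f = f := by
  have key : rename (⇑a ∘ ⇑b ∘ ⇑c) f = rename ⇑a (rename ⇑b (rename ⇑c f)) := by
    rw [rename_rename, rename_rename, Function.comp_assoc]
  rw [hs, key, hc, hb, ha]

lemma move (p : MvPolynomial (Fin 4) ℤ) (σ c d : Perm (Fin 4))
    (h : (⇑σ : Fin 4 → Fin 4) = ⇑c ∘ ⇑d) (hd : rename ⇑d p = p) :
    rename ⇑σ p = rename ⇑c p := by
  rw [h, ← rename_rename, hd]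

lemma cramer (P1 P2 P3 M1 M2 M3 : MvPolynomial (Fin 4) ℤ) :
    (M1 - M2) * (M1 - M3) * (M2 - M3) * P1 =
      (P1 * (M2 - M3) + P2 * (M3 - M1) + P3 * (M1 - M2)) * M1 ^ 2
    + (P1 * (M3 ^ 2 - M2 ^ 2) + P2 * (M1 ^ 2 - M3 ^ 2) + P3 * (M2 ^ 2 - M1 ^ 2)) * M1
    + (P1 * (M2 ^ 2 * M3 - M3 ^ 2 * M2) + P2 * (M3 ^ 2 * M1 - M1 ^ 2 * M3)
        + P3 * (M1 ^ 2 * M2 - M2 ^ 2 * M1)) := by ring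

lemma V_dvd (f : MvPolynomial (Fin 4) ℤ)
    (h01 : rename (⇑(swap (0:Fin 4) 1)) f = -f)
    (h12 : rename (⇑(swap (1:Fin 4) 2)) f = -f)
    (h23 : rename (⇑(swap (2:Fin 4) 3)) f = -f) :
    ((X 0 - X 1) * ((X 0 - X 2) * ((X 0 - X 3) * ((X 1 - X 2) * ((X 1 - X 3) * (X 2 - X 3))))) :
      MvPolynomial (Fin 4) ℤ) ∣ f := by
  have h02 : rename (⇑(swap (0:Fin 4) 2)) f = -f :=
    alt_comp f _ _ _ _ (by decide : (⇑(swap (0:Fin 4) 2) : Fin 4 → Fin 4) = ⇑(swap (0:Fin 4) 1) ∘ ⇑(swap (1:Fin 4) 2) ∘ ⇑(swap (0:Fin 4) 1)) h01 h12 h01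
  have h13 : rename (⇑(swap (1:Fin 4) 3)) f = -f :=
    alt_comp f _ _ _ _ (by decide : (⇑(swap (1:Fin 4) 3) : Fin 4 → Fin 4) = ⇑(swap (1:Fin 4) 2) ∘ ⇑(swap (2:Fin 4) 3) ∘ ⇑(swap (1:Fin 4) 2)) h12 h23 h12
  have h03 : rename (⇑(swap (0:Fin 4) 3)) f = -f :=
    alt_comp f _ _ _ _ (by decide : (⇑(swap (0:Fin 4) 3) : Fin 4 → Fin 4) = ⇑(swap (0:Fin 4) 2) ∘ ⇑(swap (2:Fin 4) 3) ∘ ⇑(swap (0:Fin 4) 2)) h02 h23 h02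
  have d1 : (X 0 - X 1 : MvPolynomial (Fin 4) ℤ) ∣ f := dvd_of_alt 0 1 (by decide) f h01
  have d2 : (X 0 - X 2 : MvPolynomial (Fin 4) ℤ) ∣ f := dvd_of_alt 0 2 (by decide) f h02
  have d3 : (X 0 - X 3 : MvPolynomial (Fin 4) ℤ) ∣ f := dvd_of_alt 0 3 (by decide) f h03
  have d4 : (X 1 - X 2 : MvPolynomial (Fin 4) ℤ) ∣ f := dvd_of_alt 1 2 (by decide) f h12
  have d5 : (X 1 - X 3 : MvPolynomial (Fin 4) ℤ) ∣ f := dvd_of_alt 1 3 (by decide) f h13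
  have d6 : (X 2 - X 3 : MvPolynomial (Fin 4) ℤ) ∣ f := dvd_of_alt 2 3 (by decide) f h23
  have pr2 := prime_X_sub_X 0 2 (by decide)
  have pr3 := prime_X_sub_X 0 3 (by decide)
  have pr4 := prime_X_sub_X 1 2 (by decide)
  have pr5 := prime_X_sub_X 1 3 (by decide)
  have pr6 := prime_X_sub_X 2 3 (by decide)
  have nd2_1 : ¬ ((X 0 - X 2 : MvPolynomial (Fin 4) ℤ) ∣ X 0 - X 1) := not_dvd_aux 0 2 0 1 (by decide) (by decide)
  have nd3_1 : ¬ ((X 0 - X 3 : MvPolynomial (Fin 4) ℤ) ∣ X 0 - X 1) := not_dvd_aux 0 3 0 1 (by decide) (by decide)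
  have nd3_2 : ¬ ((X 0 - X 3 : MvPolynomial (Fin 4) ℤ) ∣ X 0 - X 2) := not_dvd_aux 0 3 0 2 (by decide) (by decide)
  have nd4_1 : ¬ ((X 1 - X 2 : MvPolynomial (Fin 4) ℤ) ∣ X 0 - X 1) := not_dvd_aux 1 2 0 1 (by decide) (by decide)
  have nd4_2 : ¬ ((X 1 - X 2 : MvPolynomial (Fin 4) ℤ) ∣ X 0 - X 2) := not_dvd_aux 1 2 0 2 (by decide) (by decide)
  have nd4_3 : ¬ ((X 1 - X 2 : MvPolynomial (Fin 4) ℤ) ∣ X 0 - X 3) := not_dvd_aux 1 2 0 3 (by decide) (by decide)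
  have nd5_1 : ¬ ((X 1 - X 3 : MvPolynomial (Fin 4) ℤ) ∣ X 0 - X 1) := not_dvd_aux 1 3 0 1 (by decide) (by decide)
  have nd5_2 : ¬ ((X 1 - X 3 : MvPolynomial (Fin 4) ℤ) ∣ X 0 - X 2) := not_dvd_aux 1 3 0 2 (by decide) (by decide)
  have nd5_3 : ¬ ((X 1 - X 3 : MvPolynomial (Fin 4) ℤ) ∣ X 0 - X 3) := not_dvd_aux 1 3 0 3 (by decide) (by decide)
  have nd5_4 : ¬ ((X 1 - X 3 : MvPolynomial (Fin 4) ℤ) ∣ X 1 - X 2) := not_dvd_aux 1 3 1 2 (by decide) (by decide)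
  have nd6_1 : ¬ ((X 2 - X 3 : MvPolynomial (Fin 4) ℤ) ∣ X 0 - X 1) := not_dvd_aux 2 3 0 1 (by decide) (by decide)
  have nd6_2 : ¬ ((X 2 - X 3 : MvPolynomial (Fin 4) ℤ) ∣ X 0 - X 2) := not_dvd_aux 2 3 0 2 (by decide) (by decide)
  have nd6_3 : ¬ ((X 2 - X 3 : MvPolynomial (Fin 4) ℤ) ∣ X 0 - X 3) := not_dvd_aux 2 3 0 3 (by decide) (by decide)
  have nd6_4 : ¬ ((X 2 - X 3 : MvPolynomial (Fin 4) ℤ) ∣ X 1 - X 2) := not_dvd_aux 2 3 1 2 (by decide) (by decide)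
  have nd6_5 : ¬ ((X 2 - X 3 : MvPolynomial (Fin 4) ℤ) ∣ X 1 - X 3) := not_dvd_aux 2 3 1 3 (by decide) (by decide)
  obtain ⟨b1, e1⟩ := d1
  have t2 : (X 0 - X 2 : MvPolynomial (Fin 4) ℤ) ∣ b1 := by
    rw [e1] at d2
    exact (pr2.dvd_or_dvd d2).resolve_left nd2_1
  obtain ⟨b2, e2⟩ := t2
  have t3 : (X 0 - X 3 : MvPolynomial (Fin 4) ℤ) ∣ b2 := by
    rw [e1, e2] at d3
    exact (pr3.dvd_or_dvd ((pr3.dvd_or_dvd d3).resolve_left nd3_1)).resolve_left nd3_2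
  obtain ⟨b3, e3⟩ := t3
  have t4 : (X 1 - X 2 : MvPolynomial (Fin 4) ℤ) ∣ b3 := by
    rw [e1, e2, e3] at d4
    exact (pr4.dvd_or_dvd ((pr4.dvd_or_dvd ((pr4.dvd_or_dvd d4).resolve_left nd4_1)).resolve_left nd4_2)).resolve_left nd4_3
  obtain ⟨b4, e4⟩ := t4
  have t5 : (X 1 - X 3 : MvPolynomial (Fin 4) ℤ) ∣ b4 := by
    rw [e1, e2, e3, e4] at d5
    exact (pr5.dvd_or_dvd ((pr5.dvd_or_dvd ((pr5.dvd_or_dvd ((pr5.dvd_or_dvd d5).resolve_left nd5_1)).resolve_left nd5_2)).resolve_left nd5_3)).resolve_left nd5_4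
  obtain ⟨b5, e5⟩ := t5
  have t6 : (X 2 - X 3 : MvPolynomial (Fin 4) ℤ) ∣ b5 := by
    rw [e1, e2, e3, e4, e5] at d6
    exact (pr6.dvd_or_dvd ((pr6.dvd_or_dvd ((pr6.dvd_or_dvd ((pr6.dvd_or_dvd ((pr6.dvd_or_dvd d6).resolve_left nd6_1)).resolve_left nd6_2)).resolve_left nd6_3)).resolve_left nd6_4)).resolve_left nd6_5
  obtain ⟨b6, e6⟩ := t6
  exact ⟨b6, by rw [e1, e2, e3, e4, e5, e6]; ring⟩

lemma symmetric_of_gens (g : MvPolynomial (Fin 4) ℤ)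
    (h01 : rename (⇑(swap (0:Fin 4) 1)) g = g)
    (h12 : rename (⇑(swap (1:Fin 4) 2)) g = g)
    (h23 : rename (⇑(swap (2:Fin 4) 3)) g = g) : g.IsSymmetric := by
  have h02 : rename (⇑(swap (0:Fin 4) 2)) g = g :=
    sym_comp g _ _ _ _ (by decide : (⇑(swap (0:Fin 4) 2) : Fin 4 → Fin 4) = ⇑(swap (0:Fin 4) 1) ∘ ⇑(swap (1:Fin 4) 2) ∘ ⇑(swap (0:Fin 4) 1)) h01 h12 h01
  have h13 : rename (⇑(swap (1:Fin 4) 3)) g = g :=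
    sym_comp g _ _ _ _ (by decide : (⇑(swap (1:Fin 4) 3) : Fin 4 → Fin 4) = ⇑(swap (1:Fin 4) 2) ∘ ⇑(swap (2:Fin 4) 3) ∘ ⇑(swap (1:Fin 4) 2)) h12 h23 h12
  have h03 : rename (⇑(swap (0:Fin 4) 3)) g = g :=
    sym_comp g _ _ _ _ (by decide : (⇑(swap (0:Fin 4) 3) : Fin 4 → Fin 4) = ⇑(swap (0:Fin 4) 2) ∘ ⇑(swap (2:Fin 4) 3) ∘ ⇑(swap (0:Fin 4) 2)) h02 h23 h02
  have hall : ∀ x y : Fin 4, x ≠ y → rename (⇑(swap x y)) g = g := by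
    intro x y hxy
    fin_cases x <;> fin_cases y
    · exact absurd rfl hxy
    · exact h01
    · exact h02
    · exact h03
    · rw [Equiv.swap_comm]; exact h01
    · exact absurd rfl hxy
    · exact h12
    · exact h13
    · rw [Equiv.swap_comm]; exact h02
    · rw [Equiv.swap_comm]; exact h12
    · exact absurd rfl hxy
    · exact h23
    · rw [Equiv.swap_comm]; exact h03
    · rw [Equiv.swap_comm]; exact h13
    · rw [Equiv.swap_comm]; exact h23
    · exact absurd rfl hxy
  intro σ
  refine Equiv.Perm.swap_induction_on σ ?_ ?_
  · rw [Equiv.Perm.coe_one, rename_id, AlgHom.id_apply]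
  · intro f x y hxy ih
    rw [Equiv.Perm.coe_mul, ← rename_rename, ih, hall x y hxy]


lemma eval_L1 : eval (fun i : Fin 4 => (i : ℤ)) L1 = 3 := by simp [L1] <;> decide
lemma eval_L2 : eval (fun i : Fin 4 => (i : ℤ)) L2 = 6 := by simp [L2] <;> decide
lemma eval_L3 : eval (fun i : Fin 4 => (i : ℤ)) L3 = 2 := by simp [L3] <;> decide

lemma L_ne_12 : (L1 - L2 : MvPolynomial (Fin 4) ℤ) ≠ 0 := by
  intro h
  have h1 := congrArg (eval (fun i : Fin 4 => (i : ℤ))) h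
  rw [map_sub, eval_L1, eval_L2, map_zero] at h1
  norm_num at h1

lemma L_ne_13 : (L1 - L3 : MvPolynomial (Fin 4) ℤ) ≠ 0 := by
  intro h
  have h1 := congrArg (eval (fun i : Fin 4 => (i : ℤ))) h
  rw [map_sub, eval_L1, eval_L3, map_zero] at h1
  norm_num at h1

lemma L_ne_23 : (L2 - L3 : MvPolynomial (Fin 4) ℤ) ≠ 0 := by
  intro h
  have h1 := congrArg (eval (fun i : Fin 4 => (i : ℤ))) h
  rw [map_sub, eval_L2, eval_L3, map_zero] at h1
  norm_num at h1

lemma Delta_ne : ((L1 - L2) * (L1 - L3) * (L2 - L3) : MvPolynomial (Fin 4) ℤ) ≠ 0 :=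
  mul_ne_zero (mul_ne_zero L_ne_12 L_ne_13) L_ne_23

end Stmt11Aux

open Stmt11Aux

/-- `ℤ[x₁,x₂,x₃,x₄]^{D₄}` is free of rank 3 over `ℤ[x₁,x₂,x₃,x₄]^{S₄}` with basis
`{1, Λ, Λ²}`, `Λ = x₁x₃ + x₂x₄`: every `D₄`-invariant `p` is uniquely of the form
`q·Λ² + r·Λ + s` with `q, r, s` symmetric. -/
theorem stmt11 (p : MvPolynomial (Fin 4) ℤ) (hp : ∀ σ ∈ D4, rename (⇑σ) p = p) :
    let Λ : MvPolynomial (Fin 4) ℤ := X 0 * X 2 + X 1 * X 3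
    ∃! t : {q : MvPolynomial (Fin 4) ℤ // q.IsSymmetric} ×
           {q : MvPolynomial (Fin 4) ℤ // q.IsSymmetric} ×
           {q : MvPolynomial (Fin 4) ℤ // q.IsSymmetric},
      p = (t.1 : MvPolynomial (Fin 4) ℤ) * Λ ^ 2 + (t.2.1 : _) * Λ + (t.2.2 : _) := by
  intro Λ

  have m1 : Equiv.swap (0 : Fin 4) 2 ∈ D4 := Subgroup.subset_closure (Set.mem_insert _ _)
  have m2 : finRotate 4 ∈ D4 := Subgroup.subset_closure (Set.mem_insert_of_mem _ rfl)
  have m13 : Equiv.swap (1 : Fin 4) 3 ∈ D4 := by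
    rw [show Equiv.swap (1 : Fin 4) 3 = finRotate 4 * Equiv.swap 0 2 * (finRotate 4)⁻¹ by decide]
    exact mul_mem (mul_mem m2 m1) (inv_mem m2)
  have md : (Equiv.swap (0 : Fin 4) 1 * Equiv.swap (2 : Fin 4) 3) ∈ D4 := by
    rw [show Equiv.swap (0 : Fin 4) 1 * Equiv.swap (2 : Fin 4) 3 = Equiv.swap 0 2 * finRotate 4 by decide]
    exact mul_mem m1 m2
  have i02 : rename (⇑(Equiv.swap (0 : Fin 4) 2)) p = p := hp _ m1
  have i13 : rename (⇑(Equiv.swap (1 : Fin 4) 3)) p = p := hp _ m13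
  have id4 : rename (⇑(Equiv.swap (0 : Fin 4) 1 * Equiv.swap (2 : Fin 4) 3)) p = p := hp _ md
  set p2 : MvPolynomial (Fin 4) ℤ := rename (⇑(Equiv.swap (1 : Fin 4) 2)) p with hp2
  set p3 : MvPolynomial (Fin 4) ℤ := rename (⇑(Equiv.swap (2 : Fin 4) 3)) p with hp3
  have f01_1 : rename (⇑(Equiv.swap (0 : Fin 4) 1)) p = p3 := by
    rw [show (⇑(Equiv.swap (0 : Fin 4) 1) : Fin 4 → Fin 4) =
        ⇑(Equiv.swap (2 : Fin 4) 3) ∘ ⇑(Equiv.swap (0 : Fin 4) 1 * Equiv.swap (2 : Fin 4) 3) by decide,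
      ← rename_rename, id4]
  have f01_2 : rename (⇑(Equiv.swap (0 : Fin 4) 1)) p2 = p2 := by
    rw [hp2, rename_rename,
      show (⇑(Equiv.swap (0 : Fin 4) 1) ∘ ⇑(Equiv.swap (1 : Fin 4) 2) : Fin 4 → Fin 4) =
        ⇑(Equiv.swap (1 : Fin 4) 2) ∘ ⇑(Equiv.swap (0 : Fin 4) 2) by decide,
      ← rename_rename, i02]
  have f01_3 : rename (⇑(Equiv.swap (0 : Fin 4) 1)) p3 = p := by
    rw [hp3, rename_rename,
      show (⇑(Equiv.swap (0 : Fin 4) 1) ∘ ⇑(Equiv.swap (2 : Fin 4) 3) : Fin 4 → Fin 4) =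
        ⇑(Equiv.swap (0 : Fin 4) 1 * Equiv.swap (2 : Fin 4) 3) by decide, id4]
  have f12_1 : rename (⇑(Equiv.swap (1 : Fin 4) 2)) p = p2 := rfl
  have f12_2 : rename (⇑(Equiv.swap (1 : Fin 4) 2)) p2 = p := by
    rw [hp2, rename_rename,
      show (⇑(Equiv.swap (1 : Fin 4) 2) ∘ ⇑(Equiv.swap (1 : Fin 4) 2) : Fin 4 → Fin 4) = id by decide,
      rename_id, AlgHom.id_apply]
  have f12_3 : rename (⇑(Equiv.swap (1 : Fin 4) 2)) p3 = p3 := by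
    rw [hp3, rename_rename,
      show (⇑(Equiv.swap (1 : Fin 4) 2) ∘ ⇑(Equiv.swap (2 : Fin 4) 3) : Fin 4 → Fin 4) =
        ⇑(Equiv.swap (2 : Fin 4) 3) ∘ ⇑(Equiv.swap (1 : Fin 4) 3) by decide,
      ← rename_rename, i13]
  have f23_1 : rename (⇑(Equiv.swap (2 : Fin 4) 3)) p = p3 := rfl
  have f23_2 : rename (⇑(Equiv.swap (2 : Fin 4) 3)) p2 = p2 := by
    rw [hp2, rename_rename,
      show (⇑(Equiv.swap (2 : Fin 4) 3) ∘ ⇑(Equiv.swap (1 : Fin 4) 2) : Fin 4 → Fin 4) =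
        ⇑(Equiv.swap (1 : Fin 4) 2) ∘ ⇑(Equiv.swap (1 : Fin 4) 3) by decide,
      ← rename_rename, i13]
  have f23_3 : rename (⇑(Equiv.swap (2 : Fin 4) 3)) p3 = p := by
    rw [hp3, rename_rename,
      show (⇑(Equiv.swap (2 : Fin 4) 3) ∘ ⇑(Equiv.swap (2 : Fin 4) 3) : Fin 4 → Fin 4) = id by decide,
      rename_id, AlgHom.id_apply]

  set Dq : MvPolynomial (Fin 4) ℤ :=
    p * (L2 - L3) + p2 * (L3 - L1) + p3 * (L1 - L2) with hDq
  set Dr : MvPolynomial (Fin 4) ℤ :=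
    p * (L3 ^ 2 - L2 ^ 2) + p2 * (L1 ^ 2 - L3 ^ 2) + p3 * (L2 ^ 2 - L1 ^ 2) with hDr
  set Ds : MvPolynomial (Fin 4) ℤ :=
    p * (L2 ^ 2 * L3 - L3 ^ 2 * L2) + p2 * (L3 ^ 2 * L1 - L1 ^ 2 * L3)
      + p3 * (L1 ^ 2 * L2 - L2 ^ 2 * L1) with hDs

  have aDq01 : rename (⇑(Equiv.swap (0 : Fin 4) 1)) Dq = -Dq := by
    rw [hDq]
    simp only [map_add, map_mul, map_sub, map_pow, f01_1, f01_2, f01_3,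
      ren01_L1, ren01_L2, ren01_L3]
    ring

  have aDq12 : rename (⇑(Equiv.swap (1 : Fin 4) 2)) Dq = -Dq := by
    rw [hDq]
    simp only [map_add, map_mul, map_sub, map_pow, f12_1, f12_2, f12_3,
      ren12_L1, ren12_L2, ren12_L3]
    ring

  have aDq23 : rename (⇑(Equiv.swap (2 : Fin 4) 3)) Dq = -Dq := by
    rw [hDq]
    simp only [map_add, map_mul, map_sub, map_pow, f23_1, f23_2, f23_3,
      ren23_L1, ren23_L2, ren23_L3]
    ring

  have aDr01 : rename (⇑(Equiv.swap (0 : Fin 4) 1)) Dr = -Dr := by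
    rw [hDr]
    simp only [map_add, map_mul, map_sub, map_pow, f01_1, f01_2, f01_3,
      ren01_L1, ren01_L2, ren01_L3]
    ring

  have aDr12 : rename (⇑(Equiv.swap (1 : Fin 4) 2)) Dr = -Dr := by
    rw [hDr]
    simp only [map_add, map_mul, map_sub, map_pow, f12_1, f12_2, f12_3,
      ren12_L1, ren12_L2, ren12_L3]
    ring

  have aDr23 : rename (⇑(Equiv.swap (2 : Fin 4) 3)) Dr = -Dr := by
    rw [hDr]
    simp only [map_add, map_mul, map_sub, map_pow, f23_1, f23_2, f23_3,
      ren23_L1, ren23_L2, ren23_L3]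
    ring

  have aDs01 : rename (⇑(Equiv.swap (0 : Fin 4) 1)) Ds = -Ds := by
    rw [hDs]
    simp only [map_add, map_mul, map_sub, map_pow, f01_1, f01_2, f01_3,
      ren01_L1, ren01_L2, ren01_L3]
    ring

  have aDs12 : rename (⇑(Equiv.swap (1 : Fin 4) 2)) Ds = -Ds := by
    rw [hDs]
    simp only [map_add, map_mul, map_sub, map_pow, f12_1, f12_2, f12_3,
      ren12_L1, ren12_L2, ren12_L3]
    ring

  have aDs23 : rename (⇑(Equiv.swap (2 : Fin 4) 3)) Ds = -Ds := by
    rw [hDs]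
    simp only [map_add, map_mul, map_sub, map_pow, f23_1, f23_2, f23_3,
      ren23_L1, ren23_L2, ren23_L3]
    ring

  have aD01 : rename (⇑(Equiv.swap (0 : Fin 4) 1)) ((L1 - L2) * (L1 - L3) * (L2 - L3)) =
      -((L1 - L2) * (L1 - L3) * (L2 - L3)) := by
    simp only [map_mul, map_sub, ren01_L1, ren01_L2, ren01_L3]
    ring

  have aD12 : rename (⇑(Equiv.swap (1 : Fin 4) 2)) ((L1 - L2) * (L1 - L3) * (L2 - L3)) =
      -((L1 - L2) * (L1 - L3) * (L2 - L3)) := by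
    simp only [map_mul, map_sub, ren12_L1, ren12_L2, ren12_L3]
    ring

  have aD23 : rename (⇑(Equiv.swap (2 : Fin 4) 3)) ((L1 - L2) * (L1 - L3) * (L2 - L3)) =
      -((L1 - L2) * (L1 - L3) * (L2 - L3)) := by
    simp only [map_mul, map_sub, ren23_L1, ren23_L2, ren23_L3]
    ring

  have hDV : ((L1 - L2) * (L1 - L3) * (L2 - L3) : MvPolynomial (Fin 4) ℤ) =
      -((X 0 - X 1) * ((X 0 - X 2) * ((X 0 - X 3) * ((X 1 - X 2) * ((X 1 - X 3) * (X 2 - X 3)))))) := by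
    simp only [L1, L2, L3]
    ring
  have dvdq : ((L1 - L2) * (L1 - L3) * (L2 - L3) : MvPolynomial (Fin 4) ℤ) ∣ Dq := by
    obtain ⟨c, hc⟩ := V_dvd Dq aDq01 aDq12 aDq23
    exact ⟨-c, by rw [hc, hDV]; ring⟩
  have dvdr : ((L1 - L2) * (L1 - L3) * (L2 - L3) : MvPolynomial (Fin 4) ℤ) ∣ Dr := by
    obtain ⟨c, hc⟩ := V_dvd Dr aDr01 aDr12 aDr23
    exact ⟨-c, by rw [hc, hDV]; ring⟩
  have dvds : ((L1 - L2) * (L1 - L3) * (L2 - L3) : MvPolynomial (Fin 4) ℤ) ∣ Ds := by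
    obtain ⟨c, hc⟩ := V_dvd Ds aDs01 aDs12 aDs23
    exact ⟨-c, by rw [hc, hDV]; ring⟩
  obtain ⟨gq, hgq⟩ := dvdq
  obtain ⟨gr, hgr⟩ := dvdr
  obtain ⟨gs, hgs⟩ := dvds

  have sgq01 : rename (⇑(Equiv.swap (0 : Fin 4) 1)) gq = gq := by
    have h1 := aDq01
    rw [hgq, map_mul, aD01] at h1
    have h2 : ((L1 - L2) * (L1 - L3) * (L2 - L3)) * rename (⇑(Equiv.swap (0 : Fin 4) 1)) gq =
        ((L1 - L2) * (L1 - L3) * (L2 - L3)) * gq := by linear_combination -h1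
    exact mul_left_cancel₀ Delta_ne h2

  have sgq12 : rename (⇑(Equiv.swap (1 : Fin 4) 2)) gq = gq := by
    have h1 := aDq12
    rw [hgq, map_mul, aD12] at h1
    have h2 : ((L1 - L2) * (L1 - L3) * (L2 - L3)) * rename (⇑(Equiv.swap (1 : Fin 4) 2)) gq =
        ((L1 - L2) * (L1 - L3) * (L2 - L3)) * gq := by linear_combination -h1
    exact mul_left_cancel₀ Delta_ne h2

  have sgq23 : rename (⇑(Equiv.swap (2 : Fin 4) 3)) gq = gq := by
    have h1 := aDq23
    rw [hgq, map_mul, aD23] at h1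
    have h2 : ((L1 - L2) * (L1 - L3) * (L2 - L3)) * rename (⇑(Equiv.swap (2 : Fin 4) 3)) gq =
        ((L1 - L2) * (L1 - L3) * (L2 - L3)) * gq := by linear_combination -h1
    exact mul_left_cancel₀ Delta_ne h2

  have symgq : (gq : MvPolynomial (Fin 4) ℤ).IsSymmetric :=
    symmetric_of_gens gq sgq01 sgq12 sgq23

  have sgr01 : rename (⇑(Equiv.swap (0 : Fin 4) 1)) gr = gr := by
    have h1 := aDr01
    rw [hgr, map_mul, aD01] at h1
    have h2 : ((L1 - L2) * (L1 - L3) * (L2 - L3)) * rename (⇑(Equiv.swap (0 : Fin 4) 1)) gr =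
        ((L1 - L2) * (L1 - L3) * (L2 - L3)) * gr := by linear_combination -h1
    exact mul_left_cancel₀ Delta_ne h2

  have sgr12 : rename (⇑(Equiv.swap (1 : Fin 4) 2)) gr = gr := by
    have h1 := aDr12
    rw [hgr, map_mul, aD12] at h1
    have h2 : ((L1 - L2) * (L1 - L3) * (L2 - L3)) * rename (⇑(Equiv.swap (1 : Fin 4) 2)) gr =
        ((L1 - L2) * (L1 - L3) * (L2 - L3)) * gr := by linear_combination -h1
    exact mul_left_cancel₀ Delta_ne h2

  have sgr23 : rename (⇑(Equiv.swap (2 : Fin 4) 3)) gr = gr := by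
    have h1 := aDr23
    rw [hgr, map_mul, aD23] at h1
    have h2 : ((L1 - L2) * (L1 - L3) * (L2 - L3)) * rename (⇑(Equiv.swap (2 : Fin 4) 3)) gr =
        ((L1 - L2) * (L1 - L3) * (L2 - L3)) * gr := by linear_combination -h1
    exact mul_left_cancel₀ Delta_ne h2

  have symgr : (gr : MvPolynomial (Fin 4) ℤ).IsSymmetric :=
    symmetric_of_gens gr sgr01 sgr12 sgr23

  have sgs01 : rename (⇑(Equiv.swap (0 : Fin 4) 1)) gs = gs := by
    have h1 := aDs01
    rw [hgs, map_mul, aD01] at h1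
    have h2 : ((L1 - L2) * (L1 - L3) * (L2 - L3)) * rename (⇑(Equiv.swap (0 : Fin 4) 1)) gs =
        ((L1 - L2) * (L1 - L3) * (L2 - L3)) * gs := by linear_combination -h1
    exact mul_left_cancel₀ Delta_ne h2

  have sgs12 : rename (⇑(Equiv.swap (1 : Fin 4) 2)) gs = gs := by
    have h1 := aDs12
    rw [hgs, map_mul, aD12] at h1
    have h2 : ((L1 - L2) * (L1 - L3) * (L2 - L3)) * rename (⇑(Equiv.swap (1 : Fin 4) 2)) gs =
        ((L1 - L2) * (L1 - L3) * (L2 - L3)) * gs := by linear_combination -h1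
    exact mul_left_cancel₀ Delta_ne h2

  have sgs23 : rename (⇑(Equiv.swap (2 : Fin 4) 3)) gs = gs := by
    have h1 := aDs23
    rw [hgs, map_mul, aD23] at h1
    have h2 : ((L1 - L2) * (L1 - L3) * (L2 - L3)) * rename (⇑(Equiv.swap (2 : Fin 4) 3)) gs =
        ((L1 - L2) * (L1 - L3) * (L2 - L3)) * gs := by linear_combination -h1
    exact mul_left_cancel₀ Delta_ne h2

  have symgs : (gs : MvPolynomial (Fin 4) ℤ).IsSymmetric :=
    symmetric_of_gens gs sgs01 sgs12 sgs23

  have hcram : ((L1 - L2) * (L1 - L3) * (L2 - L3)) * p = Dq * L1 ^ 2 + Dr * L1 + Ds := by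
    rw [hDq, hDr, hDs]
    exact cramer p p2 p3 L1 L2 L3
  have hfinal : p = gq * L1 ^ 2 + gr * L1 + gs := by
    apply mul_left_cancel₀ Delta_ne
    rw [hcram, hgq, hgr, hgs]
    ring
  have hΛL : Λ = L1 := rfl
  refine ⟨⟨⟨gq, symgq⟩, ⟨gr, symgr⟩, ⟨gs, symgs⟩⟩, by rw [hΛL]; exact hfinal, ?_⟩
  rintro ⟨⟨a, ha⟩, ⟨b, hb⟩, ⟨c, hcs⟩⟩ hy
  have hy' : p = a * L1 ^ 2 + b * L1 + c := by rw [← hΛL]; exact hy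
  have e1 : (a - gq) * L1 ^ 2 + (b - gr) * L1 + (c - gs) = 0 := by
    linear_combination hfinal - hy'
  have e2 : (a - gq) * L2 ^ 2 + (b - gr) * L2 + (c - gs) = 0 := by
    have h1 := congrArg (rename (⇑(Equiv.swap (1 : Fin 4) 2))) e1
    simp only [map_add, map_mul, map_sub, map_pow, map_zero, ren12_L1,
      ha (Equiv.swap (1 : Fin 4) 2), hb (Equiv.swap (1 : Fin 4) 2), hcs (Equiv.swap (1 : Fin 4) 2),
      symgq (Equiv.swap (1 : Fin 4) 2), symgr (Equiv.swap (1 : Fin 4) 2),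
      symgs (Equiv.swap (1 : Fin 4) 2)] at h1
    exact h1
  have e3 : (a - gq) * L3 ^ 2 + (b - gr) * L3 + (c - gs) = 0 := by
    have h1 := congrArg (rename (⇑(Equiv.swap (2 : Fin 4) 3))) e1
    simp only [map_add, map_mul, map_sub, map_pow, map_zero, ren23_L1,
      ha (Equiv.swap (2 : Fin 4) 3), hb (Equiv.swap (2 : Fin 4) 3), hcs (Equiv.swap (2 : Fin 4) 3),
      symgq (Equiv.swap (2 : Fin 4) 3), symgr (Equiv.swap (2 : Fin 4) 3),
      symgs (Equiv.swap (2 : Fin 4) 3)] at h1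
    exact h1
  have f12 : (L1 - L2) * ((a - gq) * (L1 + L2) + (b - gr)) = 0 := by
    linear_combination e1 - e2
  have f13 : (L1 - L3) * ((a - gq) * (L1 + L3) + (b - gr)) = 0 := by
    linear_combination e1 - e3
  have g12 : (a - gq) * (L1 + L2) + (b - gr) = 0 :=
    (mul_eq_zero.mp f12).resolve_left L_ne_12
  have g13 : (a - gq) * (L1 + L3) + (b - gr) = 0 :=
    (mul_eq_zero.mp f13).resolve_left L_ne_13
  have fA : (L2 - L3) * (a - gq) = 0 := by linear_combination g12 - g13
  have hA0 : a - gq = 0 := (mul_eq_zero.mp fA).resolve_left L_ne_23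
  have hB0 : b - gr = 0 := by linear_combination g12 - (L1 + L2) * hA0
  have hC0 : c - gs = 0 := by linear_combination e1 - L1 ^ 2 * hA0 - L1 * hB0
  have : a = gq := sub_eq_zero.mp hA0
  have : b = gr := sub_eq_zero.mp hB0
  have : c = gs := sub_eq_zero.mp hC0
  exact Prod.ext (Subtype.ext (sub_eq_zero.mp hA0))
    (Prod.ext (Subtype.ext (sub_eq_zero.mp hB0)) (Subtype.ext (sub_eq_zero.mp hC0)))
end

section
/- Let R be a commutative ring and f ∈ R[x] monic of degree n. Suppose f = f₁ f₂ with f₁, f₂ monic of degrees n₁, n₂. Then the R-algebra homomorphism R[x]/(f) → R[x]/(f₁) × R[x]/(f₂) sending x to (x, x) preserves characteristic polynomials: for every element a of R[x]/(f), the characteristic polynomial of a equals the characteristic polynomial of its image. -/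
open Polynomial

private lemma sum_fin_monomial {R : Type*} [CommRing R] {q : R[X]} {m : ℕ}
    (h : q.degree < m) : (∑ i : Fin m, monomial (i : ℕ) (q.coeff i)) = q :=
  (Polynomial.sum_fin (fun i c => monomial i c) (by simp) h).trans (sum_monomial_eq q)

private lemma mk_sum_smul {R : Type*} [CommRing R] (f g : R[X]) {q : R[X]} {m : ℕ}
    (h : q.degree < m) :
    (∑ k : Fin m, q.coeff k • AdjoinRoot.mk f (g * X ^ (k : ℕ))) = AdjoinRoot.mk f (g * q) := by
  conv_rhs => rw [← sum_fin_monomial h]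
  rw [Finset.mul_sum, map_sum]
  refine Finset.sum_congr rfl fun k _ => ?_
  rw [AdjoinRoot.smul_mk, smul_eq_C_mul, ← C_mul_X_pow_eq_monomial]
  ring_nf

/-- If `f = f₁ f₂` with `f`, `f₁`, `f₂` monic, then the `R`-algebra homomorphism
`R[x]/(f) → R[x]/(f₁) × R[x]/(f₂)` sending `x ↦ (x, x)` preserves characteristic
polynomials (computed with respect to the power bases of the quotients). -/
theorem stmt15 (R : Type*) [CommRing R] (f f₁ f₂ : R[X])
    (hf : f.Monic) (h₁ : f₁.Monic) (h₂ : f₂.Monic) (hmul : f = f₁ * f₂)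
    (φ : AdjoinRoot f →ₐ[R] AdjoinRoot f₁ × AdjoinRoot f₂)
    (hφ : φ (AdjoinRoot.root f) = (AdjoinRoot.root f₁, AdjoinRoot.root f₂))
    (a : AdjoinRoot f) :
    (Algebra.leftMulMatrix (AdjoinRoot.powerBasis' hf).basis a).charpoly =
      (Algebra.leftMulMatrix
        (((AdjoinRoot.powerBasis' h₁).basis).prod ((AdjoinRoot.powerBasis' h₂).basis))
        (φ a)).charpoly := by
  cases subsingleton_or_nontrivial R
  · exact Subsingleton.elim _ _
  obtain ⟨p, rfl⟩ := AdjoinRoot.mk_surjective a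
  set n₁ := f₁.natDegree with hn₁
  set n₂ := f₂.natDegree with hn₂
  have hf0 : f ≠ 0 := hf.ne_zero
  have hn : f.natDegree = n₁ + n₂ := by rw [hmul, h₁.natDegree_mul h₂]
  show (Algebra.leftMulMatrix (AdjoinRoot.powerBasisAux' hf) (AdjoinRoot.mk f p)).charpoly =
      (Algebra.leftMulMatrix
        ((AdjoinRoot.powerBasisAux' h₁).prod (AdjoinRoot.powerBasisAux' h₂))
        (φ (AdjoinRoot.mk f p))).charpoly
  set b := AdjoinRoot.powerBasisAux' hf with hb
  set b₁ := AdjoinRoot.powerBasisAux' h₁ with hb₁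
  set b₂ := AdjoinRoot.powerBasisAux' h₂ with hb₂
  have hb₁i : ∀ i : Fin n₁, b₁ i = AdjoinRoot.mk f₁ (X ^ (i : ℕ)) := by
    intro i
    have h := (AdjoinRoot.powerBasis' h₁).basis_eq_pow i
    rw [AdjoinRoot.powerBasis'_gen] at h
    exact h.trans (by rw [AdjoinRoot.root, ← map_pow])
  have hb₂i : ∀ i : Fin n₂, b₂ i = AdjoinRoot.mk f₂ (X ^ (i : ℕ)) := by
    intro i
    have h := (AdjoinRoot.powerBasis' h₂).basis_eq_pow i
    rw [AdjoinRoot.powerBasis'_gen] at h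
    exact h.trans (by rw [AdjoinRoot.root, ← map_pow])
  set A₁ := Algebra.leftMulMatrix b₁ (AdjoinRoot.mk f₁ p) with hA₁
  set A₂ := Algebra.leftMulMatrix b₂ (AdjoinRoot.mk f₂ p) with hA₂
  -- `φ` is the canonical map
  have hφa : φ (AdjoinRoot.mk f p) = (AdjoinRoot.mk f₁ p, AdjoinRoot.mk f₂ p) := by
    have h0 : φ (AdjoinRoot.mk f p) =
        aeval ((AdjoinRoot.root f₁, AdjoinRoot.root f₂) : AdjoinRoot f₁ × AdjoinRoot f₂) p := by
      rw [← AdjoinRoot.aeval_eq, ← Polynomial.aeval_algHom_apply, hφ]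
    rw [h0]
    refine Prod.ext ?_ ?_
    · exact ((Polynomial.aeval_algHom_apply
        (AlgHom.fst R (AdjoinRoot f₁) (AdjoinRoot f₂)) _ p).symm).trans (AdjoinRoot.aeval_eq p)
    · exact ((Polynomial.aeval_algHom_apply
        (AlgHom.snd R (AdjoinRoot f₁) (AdjoinRoot f₂)) _ p).symm).trans (AdjoinRoot.aeval_eq p)
  -- RHS
  have hRHS : Algebra.leftMulMatrix (b₁.prod b₂) (φ (AdjoinRoot.mk f p)) =
      Matrix.fromBlocks A₁ 0 0 A₂ := by
    rw [hφa, Algebra.leftMulMatrix_apply]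
    have hl : Algebra.lmul R (AdjoinRoot f₁ × AdjoinRoot f₂) (AdjoinRoot.mk f₁ p, AdjoinRoot.mk f₂ p)
        = (Algebra.lmul R (AdjoinRoot f₁) (AdjoinRoot.mk f₁ p)).prodMap
          (Algebra.lmul R (AdjoinRoot f₂) (AdjoinRoot.mk f₂ p)) := by
      apply LinearMap.ext; rintro ⟨x, y⟩; rfl
    rw [hl, LinearMap.toMatrix_prodMap, hA₁, hA₂, Algebra.leftMulMatrix_apply,
      Algebra.leftMulMatrix_apply]
  rw [hRHS, Matrix.charpoly_fromBlocks_zero₁₂]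
  -- LHS
  haveI := Module.Free.of_basis b
  haveI := Module.Finite.of_basis b
  rw [Algebra.leftMulMatrix_apply, LinearMap.charpoly_toMatrix]
  -- the triangular basis
  set κ : Fin n₁ ⊕ Fin n₂ ≃ Fin f.natDegree := finSumFinEquiv.trans (finCongr hn.symm) with hκ
  have hκl : ∀ i : Fin n₁, (κ (Sum.inl i) : ℕ) = i := fun i => rfl
  have hκr : ∀ j : Fin n₂, (κ (Sum.inr j) : ℕ) = n₁ + j := fun j => rfl
  set wp : Fin n₁ ⊕ Fin n₂ → R[X] := Sum.elim (fun i => X ^ (i : ℕ)) (fun j => f₁ * X ^ (j : ℕ))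
    with hwp
  have hwpm : ∀ s, (wp s).Monic := by
    rintro (i | j)
    · exact monic_X_pow _
    · exact h₁.mul (monic_X_pow _)
  have hwpd : ∀ s, (wp s).natDegree = (κ s : ℕ) := by
    rintro (i | j)
    · simp [hwp, hκl]
    · simp [hwp, h₁.natDegree_mul (monic_X_pow _), hκr]; rfl
  have hdeg : ∀ s, (wp s).degree < f.degree := by
    intro s
    rw [degree_eq_natDegree (hwpm s).ne_zero, degree_eq_natDegree hf0, hwpd s, Nat.cast_lt]
    exact (κ s).isLt
  have hmod : ∀ s, wp s %ₘ f = wp s := fun s => (modByMonic_eq_self_iff hf).mpr (hdeg s)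
  set w : Fin n₁ ⊕ Fin n₂ → AdjoinRoot f := fun s => AdjoinRoot.mk f (wp s) with hw
  have hrepr : ∀ (q : R[X]) (k : Fin f.natDegree),
      b.repr (AdjoinRoot.mk f q) k = (q %ₘ f).coeff k := by
    intro q k
    rw [hb, AdjoinRoot.powerBasisAux'_repr_apply_to_fun, AdjoinRoot.modByMonicHom_mk]
  set T : Matrix (Fin f.natDegree) (Fin f.natDegree) R := b.toMatrix (w ∘ κ.symm) with hT
  have hTe : ∀ k l, T k l = (wp (κ.symm l)).coeff k := by
    intro k l
    rw [hT, Module.Basis.toMatrix_apply, Function.comp_apply, hw, hrepr, hmod]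
  have hTtri : T.BlockTriangular id := by
    intro k l hlt
    rw [hTe]
    refine coeff_eq_zero_of_natDegree_lt ?_
    rw [hwpd, Equiv.apply_symm_apply]
    exact hlt
  have hTdet : IsUnit T.det := by
    rw [Matrix.det_of_upperTriangular hTtri]
    have : ∀ l, T l l = 1 := by
      intro l
      rw [hTe]
      have := hwpd (κ.symm l)
      rw [Equiv.apply_symm_apply] at this
      rw [← this]
      exact (hwpm _).coeff_natDegree
    simp [this]
  have hdet' : IsUnit (LinearMap.toMatrix b b (Matrix.toLin b b T)).det := by
    rwa [LinearMap.toMatrix_toLin]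
  set e : AdjoinRoot f ≃ₗ[R] AdjoinRoot f := LinearEquiv.ofIsUnitDet hdet' with he
  set v : Module.Basis (Fin n₁ ⊕ Fin n₂) R (AdjoinRoot f) := (b.map e).reindex κ.symm with hv'
  have hv : ∀ s, v s = w s := by
    intro s
    rw [hv', Module.Basis.reindex_apply, Equiv.symm_symm, Module.Basis.map_apply, he,
      LinearEquiv.ofIsUnitDet_apply, Matrix.toLin_self]
    have : ∀ k, T k (κ s) = b.repr (w s) k := by
      intro k
      rw [hT, Module.Basis.toMatrix_apply, Function.comp_apply, Equiv.symm_apply_apply]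
    simp_rw [this]
    exact b.sum_repr (w s)
  -- the block triangular matrix of multiplication by `a`
  set C : Matrix (Fin n₂) (Fin n₁) R :=
    Matrix.of fun j i => (((p * X ^ (i : ℕ)) %ₘ f) /ₘ f₁).coeff j with hC
  have hA₁e : ∀ (k i : Fin n₁), A₁ k i = ((p * X ^ (i : ℕ)) %ₘ f₁).coeff k := by
    intro k i
    rw [hA₁, Algebra.leftMulMatrix_eq_repr_mul, hb₁i, ← map_mul,
      AdjoinRoot.powerBasisAux'_repr_apply_to_fun, AdjoinRoot.modByMonicHom_mk]
  have hA₂e : ∀ (k j : Fin n₂), A₂ k j = ((p * X ^ (j : ℕ)) %ₘ f₂).coeff k := by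
    intro k j
    rw [hA₂, Algebra.leftMulMatrix_eq_repr_mul, hb₂i, ← map_mul,
      AdjoinRoot.powerBasisAux'_repr_apply_to_fun, AdjoinRoot.modByMonicHom_mk]
  have hg : Algebra.lmul R (AdjoinRoot f) (AdjoinRoot.mk f p)
      = Matrix.toLin v v (Matrix.fromBlocks A₁ 0 C A₂) := by
    apply v.ext
    intro s
    rw [Matrix.toLin_self]
    simp_rw [hv]
    rw [Fintype.sum_sum_type]
    rcases s with i | j
    · -- column of x^i
      set u : R[X] := (p * X ^ (i : ℕ)) %ₘ f with hu
      have hud : u.degree < f.degree := degree_modByMonic_lt _ hf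
      have h1 : (∑ k : Fin n₁, Matrix.fromBlocks A₁ 0 C A₂ (Sum.inl k) (Sum.inl i) • w (Sum.inl k))
          = AdjoinRoot.mk f (1 * (u %ₘ f₁)) := by
        rw [← mk_sum_smul f 1 (lt_of_lt_of_le (degree_modByMonic_lt u h₁)
          (by rw [degree_eq_natDegree h₁.ne_zero]))]
        refine Finset.sum_congr rfl fun k _ => ?_
        rw [Matrix.fromBlocks_apply₁₁, hA₁e]
        have : (p * X ^ (i : ℕ)) %ₘ f₁ = u %ₘ f₁ := by
          conv_lhs => rw [← modByMonic_add_div (p * X ^ (i : ℕ)) f, ← hu]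
          rw [add_modByMonic]
          have : (f * (p * X ^ (i : ℕ) /ₘ f)) %ₘ f₁ = 0 := by
            rw [modByMonic_eq_zero_iff_dvd h₁]
            exact Dvd.dvd.mul_right (hmul ▸ dvd_mul_right f₁ f₂) _
          rw [add_comm, this, zero_add]
        rw [this, hw]
        simp only [hwp, Sum.elim_inl, one_mul]
      have h2 : (∑ k : Fin n₂, Matrix.fromBlocks A₁ 0 C A₂ (Sum.inr k) (Sum.inl i) • w (Sum.inr k))
          = AdjoinRoot.mk f (f₁ * (u /ₘ f₁)) := by
        have hdiv : (u /ₘ f₁).degree < (n₂ : ℕ) := by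
          rcases eq_or_ne (u /ₘ f₁) 0 with h | h
          · rw [h, degree_zero]
            exact WithBot.bot_lt_coe _
          · have hu0 : u ≠ 0 := fun h0 => h (by rw [h0, zero_divByMonic])
            rw [degree_eq_natDegree h, Nat.cast_lt, natDegree_divByMonic u h₁]
            have h3 : u.natDegree < n₁ + n₂ := by
              have h4 := natDegree_lt_natDegree hu0 hud
              rwa [hn] at h4
            have hle : f₁.natDegree ≤ u.natDegree := by
              by_contra hcon
              push_neg at hcon
              apply h
              rw [divByMonic_eq_zero_iff h₁, degree_eq_natDegree hu0,
                degree_eq_natDegree h₁.ne_zero]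
              exact_mod_cast hcon
            rw [tsub_lt_iff_left hle]
            exact h3
        rw [← mk_sum_smul f f₁ hdiv]
        refine Finset.sum_congr rfl fun k _ => ?_
        rw [Matrix.fromBlocks_apply₂₁, hC, hw]
        simp only [hwp, Sum.elim_inr, Matrix.of_apply, ← hu]
      rw [h1, h2, one_mul, ← map_add]
      have : u %ₘ f₁ + f₁ * (u /ₘ f₁) = u := modByMonic_add_div u f₁
      rw [this]
      show AdjoinRoot.mk f p * AdjoinRoot.mk f (X ^ (i : ℕ)) = AdjoinRoot.mk f u
      rw [← map_mul, AdjoinRoot.mk_eq_mk]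
      exact ⟨(p * X ^ (i : ℕ)) /ₘ f, by
        have := modByMonic_add_div (p * X ^ (i : ℕ)) f
        linear_combination -this⟩
    · -- column of f₁ * x^j
      set r : R[X] := (p * X ^ (j : ℕ)) %ₘ f₂ with hr
      have h1 : (∑ k : Fin n₁, Matrix.fromBlocks A₁ 0 C A₂ (Sum.inl k) (Sum.inr j) • w (Sum.inl k))
          = 0 := by
        refine Finset.sum_eq_zero fun k _ => ?_
        rw [Matrix.fromBlocks_apply₁₂]
        simp
      have h2 : (∑ k : Fin n₂, Matrix.fromBlocks A₁ 0 C A₂ (Sum.inr k) (Sum.inr j) • w (Sum.inr k))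
          = AdjoinRoot.mk f (f₁ * r) := by
        rw [← mk_sum_smul f f₁ (lt_of_lt_of_le (degree_modByMonic_lt _ h₂)
          (by rw [degree_eq_natDegree h₂.ne_zero]))]
        refine Finset.sum_congr rfl fun k _ => ?_
        rw [Matrix.fromBlocks_apply₂₂, hA₂e, hw]
        simp only [hwp, Sum.elim_inr]
      rw [h1, h2, zero_add]
      show AdjoinRoot.mk f p * AdjoinRoot.mk f (f₁ * X ^ (j : ℕ)) = AdjoinRoot.mk f (f₁ * r)
      rw [← map_mul, AdjoinRoot.mk_eq_mk]
      exact ⟨p * X ^ (j : ℕ) /ₘ f₂, by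
        have := modByMonic_add_div (p * X ^ (j : ℕ)) f₂
        rw [hmul]
        linear_combination -f₁ * this⟩
  rw [← LinearMap.charpoly_toMatrix (Algebra.lmul R (AdjoinRoot f) (AdjoinRoot.mk f p)) v, hg,
    LinearMap.toMatrix_toLin, Matrix.charpoly_fromBlocks_zero₁₂]
end

section
/- Let R be a commutative ring, B a commutative R-algebra with an action of a finite group G by R-algebra automorphisms, and suppose |G| is a non-zerodivisor in R. Then for every R-algebra homomorphism φ : B^G → R, the structure map R → B ⊗_{B^G} R is injective. -/
/-- The subalgebra `B^G` of `G`-invariant elements of the `R`-algebra `B`. -/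
def fixedSubalgebra (G R B : Type*) [Group G] [CommRing R] [CommRing B] [Algebra R B]
    [MulSemiringAction G B] [SMulCommClass G R B] : Subalgebra R B where
  carrier := {x | ∀ g : G, g • x = x}
  mul_mem' := fun ha hb g => by rw [smul_mul', ha g, hb g]
  add_mem' := fun ha hb g => by rw [smul_add, ha g, hb g]
  one_mem' := fun g => smul_one g
  zero_mem' := fun g => smul_zero g
  algebraMap_mem' := fun r g => by
    rw [Algebra.algebraMap_eq_smul_one, smul_comm, smul_one]

/-- If `G` is a finite group acting on a commutative `R`-algebra `B` by `R`-algebra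
automorphisms and `|G|` is a non-zerodivisor in `R`, then for every `R`-algebra
homomorphism `φ : B^G → R`, the structure map `R → B ⊗_{B^G} R` is injective. -/
theorem stmt16 (G R B : Type*) [Group G] [Finite G] [CommRing R] [CommRing B]
    [Algebra R B] [MulSemiringAction G B] [SMulCommClass G R B]
    (hG : (Nat.card G : R) ∈ nonZeroDivisors R)
    (φ : fixedSubalgebra G R B →ₐ[R] R) :
    let _i : Algebra (fixedSubalgebra G R B) R := φ.toRingHom.toAlgebra
    Function.Injective
      (fun r : R => ((1 : B) ⊗ₜ[fixedSubalgebra G R B] r :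
        TensorProduct (fixedSubalgebra G R B) B R)) := by
  intro _i
  letI : Fintype G := Fintype.ofFinite G
  -- the trace lands in the fixed subalgebra
  have key : ∀ b : B, ∀ h : G, h • (∑ g : G, g • b) = ∑ g : G, g • b := by
    intro b h
    rw [Finset.smul_sum]
    exact Fintype.sum_equiv (Equiv.mulLeft h) _ _ (fun g => (mul_smul h g b).symm)
  let tr : B → fixedSubalgebra G R B := fun b => ⟨∑ g : G, g • b, key b⟩
  have smul_def : ∀ (a : fixedSubalgebra G R B) (r : R), a • r = φ a * r := by
    intro a r
    rw [Algebra.smul_def]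
    rfl
  have tr_smul : ∀ (a : fixedSubalgebra G R B) (b : B), tr (a • b) = a * tr b := by
    intro a b
    apply Subtype.ext
    show (∑ g : G, g • ((a : B) * b)) = (a : B) * ∑ g : G, g • b
    rw [Finset.mul_sum]
    refine Finset.sum_congr rfl fun g _ => ?_
    rw [smul_mul', a.2 g]
  have tr_add : ∀ b c : B, tr (b + c) = tr b + tr c := by
    intro b c
    apply Subtype.ext
    show (∑ g : G, g • (b + c)) = (∑ g : G, g • b) + ∑ g : G, g • c
    rw [← Finset.sum_add_distrib]
    exact Finset.sum_congr rfl fun g _ => smul_add g b c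
  -- the bilinear map (b, r) ↦ φ(tr b) * r
  let M : B →ₗ[fixedSubalgebra G R B] R →ₗ[fixedSubalgebra G R B] R :=
    LinearMap.mk₂ (fixedSubalgebra G R B) (fun b r => φ (tr b) * r)
    (fun b c r => by
      show φ (tr (b + c)) * r = φ (tr b) * r + φ (tr c) * r
      rw [tr_add, map_add, add_mul])
    (fun a b r => by
      show φ (tr (a • b)) * r = a • (φ (tr b) * r)
      rw [tr_smul, map_mul, smul_def]; ring)
    (fun b r s => by show φ (tr b) * (r + s) = φ (tr b) * r + φ (tr b) * s; ring)
    (fun a b r => by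
      show φ (tr b) * (a • r) = a • (φ (tr b) * r)
      rw [smul_def, smul_def]; ring)
  let ψ : TensorProduct (fixedSubalgebra G R B) B R →ₗ[fixedSubalgebra G R B] R :=
    TensorProduct.lift M
  have hψ : ∀ r : R, ψ ((1 : B) ⊗ₜ[fixedSubalgebra G R B] r) = (Nat.card G : R) * r := by
    intro r
    have h1 : tr 1 = (Nat.card G : fixedSubalgebra G R B) := by
      apply Subtype.ext
      show (∑ g : G, g • (1 : B)) = ((Nat.card G : fixedSubalgebra G R B) : B)
      simp [Nat.card_eq_fintype_card]
    show φ (tr 1) * r = (Nat.card G : R) * r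
    rw [h1, map_natCast]
  intro r₁ r₂ h
  have h2 : (Nat.card G : R) * r₁ = (Nat.card G : R) * r₂ := by
    rw [← hψ r₁, ← hψ r₂]
    exact congrArg ψ h
  have h3 : (r₁ - r₂) * (Nat.card G : R) = 0 := by linear_combination h2
  exact sub_eq_zero.mp ((mul_right_mem_nonZeroDivisors_eq_zero_iff hG).mp h3)
end

section
/- Let R be a reduced commutative ring, B a commutative R-algebra with an action of a finite group G by R-algebra automorphisms, and φ : B^G → R an R-algebra homomorphism. Then the structure map R → B ⊗_{B^G} R is injective. -/
open Polynomial in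
theorem fixed_integral (G R B : Type*) [Group G] [Finite G] [CommRing R]
    [CommRing B] [Algebra R B] [MulSemiringAction G B] [SMulCommClass G R B] :
    Algebra.IsIntegral (fixedSubalgebra G R B) B := by
  cases nonempty_fintype G
  rw [Algebra.isIntegral_def]
  intro x
  set A := fixedSubalgebra G R B with hA
  have hcoeff : ((prodXSubSMul G B x).coeffs : Set B) ⊆ A.toSubring := by
    intro c hc
    obtain ⟨n, _, rfl⟩ := Polynomial.mem_coeffs_iff.mp hc
    exact fun g => prodXSubSMul.coeff G B x g n
  refine ⟨((prodXSubSMul G B x).toSubring A.toSubring hcoeff), ?_, ?_⟩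
  · exact (Polynomial.monic_toSubring _ _ _).mpr (prodXSubSMul.monic G B x)
  · rw [Polynomial.eval₂_eq_eval_map]
    have : Polynomial.map (algebraMap A B) ((prodXSubSMul G B x).toSubring A.toSubring hcoeff)
        = prodXSubSMul G B x := by
      have h := Polynomial.map_toSubring (prodXSubSMul G B x) A.toSubring hcoeff
      exact h
    rw [this]
    exact prodXSubSMul.eval G B x

set_option maxHeartbeats 1000000 in
set_option synthInstance.maxHeartbeats 400000 in
theorem aux_inj (A B R : Type*) [CommRing A] [CommRing B] [CommRing R] [IsReduced R]
    [Algebra A B] [Algebra A R] [Algebra.IsIntegral A B]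
    (hinj : Function.Injective (algebraMap A B)) :
    Function.Injective (fun r : R => ((1 : B) ⊗ₜ[A] r : TensorProduct A B R)) := by
  intro a b hab
  rw [← sub_eq_zero]
  set r := a - b with hrdef
  have h0 : (1 : B) ⊗ₜ[A] r = 0 := by
    have hab' : (1 : B) ⊗ₜ[A] a = (1 : B) ⊗ₜ[A] b := hab
    rw [hrdef, TensorProduct.tmul_sub, hab', sub_self]
  by_contra hrne
  have hnil : ¬ IsNilpotent r := fun h => hrne h.eq_zero
  obtain ⟨p, hp, hrp⟩ : ∃ p : Ideal R, p.IsPrime ∧ r ∉ p := by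
    by_contra hcon
    push_neg at hcon
    exact hnil (by
      rw [← mem_nilradical, nilradical_eq_sInf, Ideal.mem_sInf]
      intro I hI
      exact hcon I hI)
  haveI := hp
  set q0 : Ideal A := p.comap (algebraMap A R) with hq0
  haveI : q0.IsPrime := Ideal.IsPrime.comap _
  obtain ⟨q, -, hqprime, hql⟩ := Ideal.exists_ideal_over_prime_of_isIntegral (R := A) (S := B) q0 ⊥
    (by
      intro x hx
      have hx' : (algebraMap A B) x = 0 := by rwa [Ideal.mem_comap, Ideal.mem_bot] at hx
      have hx0 : x = 0 := hinj (by rw [hx', map_zero])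
      simp [hx0, q0.zero_mem])
  haveI := hqprime
  let AQ := A ⧸ q0
  let BQ := B ⧸ q
  let RQ := R ⧸ p
  let k := FractionRing AQ
  let KB := FractionRing BQ
  let KR := FractionRing RQ
  let fAB : AQ →+* BQ := Ideal.quotientMap q (algebraMap A B) (le_of_eq hql.symm)
  have hfAB : Function.Injective fAB := Ideal.quotientMap_injective' (le_of_eq hql)
  let gAR : AQ →+* RQ := Ideal.quotientMap p (algebraMap A R) le_rfl
  have hgAR : Function.Injective gAR := Ideal.quotientMap_injective' le_rfl
  let jB : AQ →+* KB := (algebraMap BQ KB).comp fAB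
  have hjB : Function.Injective jB := (IsFractionRing.injective BQ KB).comp hfAB
  let jR : AQ →+* KR := (algebraMap RQ KR).comp gAR
  have hjR : Function.Injective jR := (IsFractionRing.injective RQ KR).comp hgAR
  letI : Algebra k KB := (IsFractionRing.lift hjB).toAlgebra
  letI : Algebra k KR := (IsFractionRing.lift hjR).toAlgebra
  haveI : SMulCommClass k k KB := ⟨fun c d x => by
    rw [Algebra.smul_def, Algebra.smul_def, Algebra.smul_def, Algebra.smul_def,
      ← mul_assoc, ← mul_assoc, mul_comm ((algebraMap k KB) c)]⟩
  haveI : SMulCommClass k k KR := ⟨fun c d x => by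
    rw [Algebra.smul_def, Algebra.smul_def, Algebra.smul_def, Algebra.smul_def,
      ← mul_assoc, ← mul_assoc, mul_comm ((algebraMap k KR) c)]⟩
  let K := TensorProduct k KB KR
  haveI : Nontrivial K := Module.FaithfullyFlat.lTensor_nontrivial k KB KR
  let F : B →+* K := (Algebra.TensorProduct.includeLeftRingHom (R := k) (A := KB) (B := KR)).comp
    ((algebraMap BQ KB).comp (Ideal.Quotient.mk q))
  let Gm : R →+* K :=
    ((Algebra.TensorProduct.includeRight (R := k) (A := KB) (B := KR)).toRingHom).comp
    ((algebraMap RQ KR).comp (Ideal.Quotient.mk p))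
  have hcomm : ∀ x : A, F ((algebraMap A B) x) = Gm ((algebraMap A R) x) := by
    intro x
    have h1 : (Ideal.Quotient.mk q) ((algebraMap A B) x) = fAB (Ideal.Quotient.mk q0 x) :=
      (Ideal.quotientMap_mk).symm
    have h2 : (Ideal.Quotient.mk p) ((algebraMap A R) x) = gAR (Ideal.Quotient.mk q0 x) :=
      (Ideal.quotientMap_mk).symm
    have h3 : (algebraMap BQ KB) (fAB (Ideal.Quotient.mk q0 x))
        = algebraMap k KB (algebraMap AQ k (Ideal.Quotient.mk q0 x)) := by
      show jB _ = IsFractionRing.lift hjB (algebraMap AQ k _)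
      rw [IsFractionRing.lift_algebraMap]
    have h4 : (algebraMap RQ KR) (gAR (Ideal.Quotient.mk q0 x))
        = algebraMap k KR (algebraMap AQ k (Ideal.Quotient.mk q0 x)) := by
      show jR _ = IsFractionRing.lift hjR (algebraMap AQ k _)
      rw [IsFractionRing.lift_algebraMap]
    show Algebra.TensorProduct.includeLeftRingHom ((algebraMap BQ KB) ((Ideal.Quotient.mk q) _))
      = Algebra.TensorProduct.includeRight ((algebraMap RQ KR) ((Ideal.Quotient.mk p) _))
    rw [h1, h2, h3, h4]
    exact (Algebra.TensorProduct.includeLeft.commutes _).trans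
      (Algebra.TensorProduct.includeRight.commutes _).symm
  letI instAK : Algebra A K := (F.comp (algebraMap A B)).toAlgebra
  haveI : @IsScalarTower A A K _ instAK.toSMul instAK.toSMul :=
    @IsScalarTower.mk A A K _ instAK.toSMul instAK.toSMul (fun x y z => by
    rw [smul_eq_mul, Algebra.smul_def, Algebra.smul_def, Algebra.smul_def, map_mul, mul_assoc])
  let fAlg : B →ₐ[A] K := { F with commutes' := fun x => rfl }
  let gAlg : R →ₐ[A] K := { Gm with commutes' := fun x => (hcomm x).symm }
  let Ψ : TensorProduct A B R →ₐ[A] K :=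
    Algebra.TensorProduct.lift fAlg gAlg (fun x y => Commute.all _ _)
  have hΨ : Ψ ((1 : B) ⊗ₜ[A] r) = Gm r := by
    rw [Algebra.TensorProduct.lift_tmul]
    show fAlg 1 * _ = _
    rw [map_one, one_mul]
    rfl
  have hGr : Gm r ≠ 0 := by
    have h1 : (Ideal.Quotient.mk p r : RQ) ≠ 0 := by
      rw [Ne, Ideal.Quotient.eq_zero_iff_mem]
      exact hrp
    have h2 : (algebraMap RQ KR) (Ideal.Quotient.mk p r) ≠ 0 := fun h =>
      h1 (IsFractionRing.injective RQ KR (by rw [h, map_zero]))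
    exact (h2.isUnit.map
      (Algebra.TensorProduct.includeRight (R := k) (A := KB) (B := KR))).ne_zero
  exact hGr (by rw [← hΨ, h0, map_zero])

/-- If `R` is reduced and the finite group `G` acts on the commutative `R`-algebra `B`
by `R`-algebra automorphisms, then for every `R`-algebra homomorphism `φ : B^G → R`,
the structure map `R → B ⊗_{B^G} R` is injective. -/
theorem stmt17 (G R B : Type*) [Group G] [Finite G] [CommRing R] [IsReduced R]
    [CommRing B] [Algebra R B] [MulSemiringAction G B] [SMulCommClass G R B]
    (φ : fixedSubalgebra G R B →ₐ[R] R) :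
    let _i : Algebra (fixedSubalgebra G R B) R := φ.toRingHom.toAlgebra
    Function.Injective
      (fun r : R => ((1 : B) ⊗ₜ[fixedSubalgebra G R B] r :
        TensorProduct (fixedSubalgebra G R B) B R)) := by
  intro _i
  haveI : Algebra.IsIntegral (fixedSubalgebra G R B) B := fixed_integral G R B
  exact aux_inj (fixedSubalgebra G R B) B R (Subtype.val_injective)
end
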